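/- arXiv:1411.4419 — 2 statements merged into one kernel-verified Lean document; each statement's English description precedes it below -/
import Mathlib

section
/- Let D be a nonzero real m×n matrix with skinny SVD D = U S Vᵀ, where U is m×r with UᵀU = Iᵣ, V is n×r with VᵀV = Iᵣ, and S is an r×r diagonal matrix with positive diagonal entries. Then every real n×n matrix X satisfying D = D X obeys the Pythagorean decomposition ‖X‖_F² = ‖V Vᵀ‖_F² + ‖(Iₙ − V Vᵀ) X‖_F². -/
open Matrix

/-- The Frobenius norm of a real matrix: ‖M‖_F = sqrt(trace(M Mᵀ)). -/
noncomputable def frobeniusNorm {m n : ℕ} (M : Matrix (Fin m) (Fin n) ℝ) : ℝ :=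
  Real.sqrt (Matrix.trace (M * Mᵀ))

lemma trace_mul_transpose_nonneg {m n : ℕ} (M : Matrix (Fin m) (Fin n) ℝ) :
    0 ≤ Matrix.trace (M * Mᵀ) := by
  rw [Matrix.trace]
  apply Finset.sum_nonneg
  intro i _
  rw [Matrix.diag_apply, Matrix.mul_apply]
  apply Finset.sum_nonneg
  intro j _
  rw [Matrix.transpose_apply]
  exact mul_self_nonneg _

lemma frob_sq {m n : ℕ} (M : Matrix (Fin m) (Fin n) ℝ) :
    (frobeniusNorm M) ^ 2 = Matrix.trace (M * Mᵀ) :=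
  Real.sq_sqrt (trace_mul_transpose_nonneg M)

/-- For a nonzero real m×n matrix D with skinny SVD D = U S Vᵀ,
every real n×n matrix X with D = D X obeys the Pythagorean decomposition
‖X‖_F² = ‖V Vᵀ‖_F² + ‖(Iₙ − V Vᵀ) X‖_F². -/
theorem stmt_5 {m n r : ℕ}
    (D : Matrix (Fin m) (Fin n) ℝ) (hD : D ≠ 0)
    (U : Matrix (Fin m) (Fin r) ℝ) (S : Matrix (Fin r) (Fin r) ℝ)
    (V : Matrix (Fin n) (Fin r) ℝ)
    (hSVD : D = U * S * Vᵀ)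
    (hU : Uᵀ * U = 1) (hV : Vᵀ * V = 1)
    (hSdiag : ∀ i j : Fin r, i ≠ j → S i j = 0)
    (hSpos : ∀ i : Fin r, 0 < S i i) :
    ∀ X : Matrix (Fin n) (Fin n) ℝ, D = D * X →
      (frobeniusNorm X) ^ 2 =
        (frobeniusNorm (V * Vᵀ)) ^ 2 + (frobeniusNorm ((1 - V * Vᵀ) * X)) ^ 2 := by
  intro X hDX
  -- Step 1: S * Vᵀ = S * (Vᵀ * X)
  have h1 : U * (S * Vᵀ) = U * (S * (Vᵀ * X)) := by
    have h0 : U * S * Vᵀ = U * S * Vᵀ * X := by rw [← hSVD, ← hDX, hSVD]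
    simpa only [Matrix.mul_assoc] using h0
  have h2 : S * Vᵀ = S * (Vᵀ * X) := by
    have h3 := congrArg (fun M => Uᵀ * M) h1
    simp only [← Matrix.mul_assoc, hU, one_mul] at h3
    simpa only [Matrix.mul_assoc] using h3
  -- Step 2: cancel the diagonal positive S
  have hVX : Vᵀ * X = Vᵀ := by
    ext i j
    have h3 : (S * Vᵀ) i j = (S * (Vᵀ * X)) i j := congrFun (congrFun h2 i) j
    rw [Matrix.mul_apply, Matrix.mul_apply] at h3
    rw [Finset.sum_eq_single i (fun k _ hk => by rw [hSdiag i k (Ne.symm hk), zero_mul])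
      (fun h => absurd (Finset.mem_univ i) h),
      Finset.sum_eq_single i (fun k _ hk => by rw [hSdiag i k (Ne.symm hk), zero_mul])
      (fun h => absurd (Finset.mem_univ i) h)] at h3
    exact (mul_left_cancel₀ (ne_of_gt (hSpos i)) h3).symm
  have hXV : Xᵀ * V = V := by
    have := congrArg Matrix.transpose hVX
    simpa [Matrix.transpose_mul] using this
  set P := V * Vᵀ with hPdef
  have hPX : P * X = P := by rw [hPdef, Matrix.mul_assoc, hVX]
  have hPt : Pᵀ = P := by rw [hPdef, Matrix.transpose_mul, Matrix.transpose_transpose]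
  have hPP : P * P = P := by
    rw [hPdef, Matrix.mul_assoc, ← Matrix.mul_assoc Vᵀ V Vᵀ, hV, Matrix.one_mul]
  -- the orthogonal complement part
  set Q := (1 - P) * X with hQdef
  have hQ : Q = X - P := by rw [hQdef, Matrix.sub_mul, one_mul, hPX]
  have hXPQ : X = P + Q := by rw [hQ]; abel
  -- trace of P * Xᵀ equals trace of P
  have hTrPX : Matrix.trace (P * Xᵀ) = Matrix.trace P := by
    rw [Matrix.trace_mul_comm, hPdef, ← Matrix.mul_assoc, hXV]
  -- cross terms vanish
  have hcross1 : Matrix.trace (P * Qᵀ) = 0 := by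
    have hq : P * Qᵀ = P * Xᵀ - P * P := by
      rw [hQ, Matrix.transpose_sub, hPt, Matrix.mul_sub]
    rw [hq, Matrix.trace_sub, hTrPX, hPP, sub_self]
  have hcross2 : Matrix.trace (Q * Pᵀ) = 0 := by
    rw [hPt, Matrix.trace_mul_comm, hQ, Matrix.mul_sub, Matrix.trace_sub, hPX, hPP, sub_self]
  -- expand
  have hexp : Matrix.trace (X * Xᵀ) =
      Matrix.trace (P * Pᵀ) + Matrix.trace (Q * Qᵀ) := by
    have hx : X * Xᵀ = P * Pᵀ + P * Qᵀ + Q * Pᵀ + Q * Qᵀ := by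
      rw [hXPQ, Matrix.transpose_add, Matrix.add_mul, Matrix.mul_add, Matrix.mul_add]
      abel
    rw [hx, Matrix.trace_add, Matrix.trace_add, Matrix.trace_add, hcross1, hcross2]
    ring
  rw [frob_sq, frob_sq, frob_sq]
  exact hexp
end

section
/- Let D be a real m×n matrix with singular values σ₁ ≥ σ₂ ≥ … ≥ σ_q ≥ 0 (q = min(m,n)), let λ > 0, and let k ∈ {0,1,…,q} be a minimizer of the function r ↦ r + λ Σᵢ₌ᵣ₊₁^q σᵢ². Then for every real m×n matrix D₀ and every real n×n matrix C satisfying D₀ = D₀ C, the PCE objective satisfies (1/2)‖C‖_F² + (λ/2)‖D − D₀‖_F² ≥ (1/2) k + (λ/2) Σᵢ₌ₖ₊₁^q σᵢ². Consequently the minimal PCE objective value equals (1/2) min_{0 ≤ r ≤ q} ( r + λ Σᵢ₌ᵣ₊₁^q σᵢ² ). -/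
/-!
If `D₀ = D₀ C`, then `C` fixes the orthogonal projection `P` onto `{v | v C = v}` (`P C = P`), a
space containing the rows of `D₀` (`D₀ P = D₀`). Hence `‖C‖² ≥ ‖P C‖² = tr P` and
`‖D - D₀‖² ≥ ‖(D - D₀)(1 - P)‖² = ‖D (1 - P)‖²`. In the basis of right singular vectors, with `t_j`
the diagonal of `Vᵀ P V` (so `0 ≤ t_j ≤ 1`) and `s_j` the squared singular values, this gives
`‖C‖² + λ‖D - D₀‖² ≥ ∑ t_j + λ ∑ s_j (1 - t_j) ≥ ∑ min(1, λ s_j)`, and since the `σᵢ` are sorted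
the last sum is `r + λ ∑_{i ≥ r} σᵢ²` for `r = #{i | λσᵢ² ≥ 1}`. Projecting onto the first `k` right
singular vectors, `C = V diag(1_{j<k}) Vᵀ` and `D₀ = D C`, attains the bound.
-/

open Matrix

open WithLp

section Projection

variable {κ ι : Type*} [Fintype ι]

theorem trace_mul_transpose_self_nonneg [Fintype κ] (A : Matrix κ ι ℝ) : 0 ≤ trace (A * Aᵀ) := by
  simpa [conjTranspose_eq_transpose_of_trivial] using
    (posSemidef_self_mul_conjTranspose A).trace_nonneg

theorem frobeniusNorm_sq {m n : ℕ} (A : Matrix (Fin m) (Fin n) ℝ) :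
    frobeniusNorm A ^ 2 = trace (A * Aᵀ) :=
  Real.sq_sqrt (trace_mul_transpose_self_nonneg A)

theorem exists_isSymm_isIdempotentElem_of_mul_eq_self [DecidableEq ι] (D₀ : Matrix κ ι ℝ)
    (C : Matrix ι ι ℝ) (h : D₀ * C = D₀) :
    ∃ P : Matrix ι ι ℝ, P.IsSymm ∧ IsIdempotentElem P ∧ D₀ * P = D₀ ∧ P * C = P := by
  let K : Submodule ℝ (EuclideanSpace ℝ ι) := LinearMap.ker (toEuclideanLin (Cᵀ - 1))
  have mem_K (v : ι → ℝ) : toLp 2 v ∈ K ↔ v ᵥ* C = v := by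
    simp [K, toLpLin_apply, mulVec_transpose, sub_eq_zero]
  let P : Matrix ι ι ℝ := toEuclideanLin.symm K.starProjection
  have hP : toEuclideanLin P = K.starProjection := toEuclideanLin.apply_symm_apply _
  have hPv (v : ι → ℝ) : P *ᵥ v = ofLp (K.starProjection (toLp 2 v)) := by
    rw [← ContinuousLinearMap.coe_coe, ← hP, toLpLin_apply]
  have hPsymm : P.IsSymm := by
    have : P.IsHermitian := isSymmetric_toEuclideanLin_iff.mp (hP ▸ K.starProjection_isSymmetric)
    exact isSymm_conjTranspose_iff.mp (congrArg transpose this)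
  refine ⟨P, hPsymm, ?_, ?_, ?_⟩
  · apply toEuclideanLin.injective
    change toEuclideanLin (P * P) = toEuclideanLin P
    rw [toLpLin_mul_same, hP]
    exact congrArg ContinuousLinearMap.toLinearMap K.isIdempotentElem_starProjection
  · funext i
    change D₀ i ᵥ* P = D₀ i
    rw [← mulVec_transpose, hPsymm.eq, hPv, K.starProjection_eq_self_iff.mpr]
    exact (mem_K _).mpr (congrFun h i)
  · funext j
    change P j ᵥ* C = P j
    have hcol : P j = P *ᵥ Pi.single j 1 := by rw [mulVec_single_one, col, hPsymm.eq]
    rw [← mem_K, hcol, hPv, toLp_ofLp]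
    exact K.starProjection_apply_mem _

variable {P : Matrix ι ι ℝ}

theorem diag_nonneg_of_isSymm_of_isIdempotentElem (hPs : P.IsSymm) (hP : IsIdempotentElem P)
    (j : ι) : 0 ≤ P j j := by
  have hdiag : P j j = (P * Pᵀ) j j := by rw [hPs.eq, hP.eq]
  rw [hdiag, mul_apply]
  exact Finset.sum_nonneg fun k _ => mul_self_nonneg _

theorem mul_mul_transpose_of_isSymm_of_isIdempotentElem (hPs : P.IsSymm)
    (hP : IsIdempotentElem P) (A : Matrix κ ι ℝ) : (A * P) * (A * P)ᵀ = A * P * Aᵀ := by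
  rw [transpose_mul, hPs.eq, Matrix.mul_assoc, ← Matrix.mul_assoc P, hP.eq, ← Matrix.mul_assoc]

variable [DecidableEq ι]

theorem trace_mul_mul_transpose_le [Fintype κ] (hPs : P.IsSymm) (hP : IsIdempotentElem P)
    (A : Matrix κ ι ℝ) : trace ((A * P) * (A * P)ᵀ) ≤ trace (A * Aᵀ) := by
  have hQ := mul_mul_transpose_of_isSymm_of_isIdempotentElem (isSymm_one.sub hPs) hP.one_sub A
  have hsplit : A * Aᵀ = A * P * Aᵀ + A * (1 - P) * Aᵀ := by
    rw [Matrix.mul_sub, Matrix.sub_mul, Matrix.mul_one]; abel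
  rw [mul_mul_transpose_of_isSymm_of_isIdempotentElem hPs hP, hsplit, trace_add,
    le_add_iff_nonneg_right, ← hQ]
  exact trace_mul_transpose_self_nonneg _

theorem diag_le_one_of_isSymm_of_isIdempotentElem (hPs : P.IsSymm) (hP : IsIdempotentElem P)
    (j : ι) : P j j ≤ 1 := by
  simpa using diag_nonneg_of_isSymm_of_isIdempotentElem (isSymm_one.sub hPs) hP.one_sub j

end Projection

section Conjugation

variable {ι ι' : Type*} [Fintype ι] {P : Matrix ι ι ℝ}

theorem Matrix.IsSymm.transpose_mul_mul (hPs : P.IsSymm) (V : Matrix ι ι' ℝ) :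
    (Vᵀ * P * V).IsSymm := by
  simp only [IsSymm, transpose_mul, transpose_transpose, hPs.eq, Matrix.mul_assoc]

theorem IsIdempotentElem.transpose_mul_mul [DecidableEq ι] [Fintype ι'] (hP : IsIdempotentElem P)
    {V : Matrix ι ι' ℝ} (hV : V * Vᵀ = 1) : IsIdempotentElem (Vᵀ * P * V) := by
  change Vᵀ * P * V * (Vᵀ * P * V) = Vᵀ * P * V
  simp only [Matrix.mul_assoc]
  rw [← Matrix.mul_assoc V Vᵀ, hV, Matrix.one_mul, ← Matrix.mul_assoc P P, hP.eq]

end Conjugation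

section Spectral

variable {κ ι : Type*} [Fintype κ] [Fintype ι] [DecidableEq ι]
  {D : Matrix κ ι ℝ} {V : Matrix ι ι ℝ} {s : ι → ℝ} {P : Matrix ι ι ℝ}

theorem trace_eq_sum_diag_transpose_mul_mul (hV : Vᵀ * V = 1) (P : Matrix ι ι ℝ) :
    trace P = ∑ j, (Vᵀ * P * V) j j := by
  change _ = trace (Vᵀ * P * V)
  rw [trace_mul_comm, ← Matrix.mul_assoc, mul_eq_one_comm.mp hV, Matrix.one_mul]

theorem trace_mul_one_sub_mul_transpose (hV : Vᵀ * V = 1) (hD : Dᵀ * D = V * diagonal s * Vᵀ)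
    (hPs : P.IsSymm) (hP : IsIdempotentElem P) :
    trace ((D * (1 - P)) * (D * (1 - P))ᵀ) = ∑ j, s j * (1 - (Vᵀ * P * V) j j) := by
  have hconj : Vᵀ * (1 - P) * V = 1 - Vᵀ * P * V := by
    rw [Matrix.mul_sub, Matrix.sub_mul, Matrix.mul_one, hV]
  calc trace ((D * (1 - P)) * (D * (1 - P))ᵀ) = trace (D * (1 - P) * Dᵀ) := by
        rw [mul_mul_transpose_of_isSymm_of_isIdempotentElem (isSymm_one.sub hPs) hP.one_sub]
    _ = trace (diagonal s * (Vᵀ * (1 - P) * V)) := by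
        rw [trace_mul_comm, ← Matrix.mul_assoc, hD, Matrix.mul_assoc, Matrix.mul_assoc,
          trace_mul_comm]
        simp only [Matrix.mul_assoc]
    _ = ∑ j, s j * (1 - (Vᵀ * P * V) j j) := by
        rw [hconj]
        simp [trace, diagonal_mul]

theorem sum_min_one_le_trace_add_trace (hV : Vᵀ * V = 1) (hD : Dᵀ * D = V * diagonal s * Vᵀ)
    {lam : ℝ} (hlam : 0 ≤ lam) {D₀ : Matrix κ ι ℝ} {C : Matrix ι ι ℝ} (h : D₀ * C = D₀) :
    ∑ j, min 1 (lam * s j) ≤ trace (C * Cᵀ) + lam * trace ((D - D₀) * (D - D₀)ᵀ) := by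
  obtain ⟨P, hPs, hP, hD₀P, hPC⟩ := exists_isSymm_isIdempotentElem_of_mul_eq_self D₀ C h
  set T := Vᵀ * P * V
  have hTs : T.IsSymm := hPs.transpose_mul_mul V
  have hT : IsIdempotentElem T := hP.transpose_mul_mul (mul_eq_one_comm.mp hV)
  have hCtr : ∑ j, T j j ≤ trace (C * Cᵀ) := by
    have hCP : Cᵀ * P = P := by rw [← hPs.eq, ← transpose_mul, hPC]
    calc ∑ j, T j j = trace ((Cᵀ * P) * (Cᵀ * P)ᵀ) := by
          rw [hCP, ← trace_eq_sum_diag_transpose_mul_mul hV, hPs.eq, hP.eq]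
      _ ≤ trace (Cᵀ * Cᵀᵀ) := trace_mul_mul_transpose_le hPs hP Cᵀ
      _ = trace (C * Cᵀ) := by rw [transpose_transpose, trace_mul_comm]
  have hEtr : ∑ j, s j * (1 - T j j) ≤ trace ((D - D₀) * (D - D₀)ᵀ) := by
    have hE : (D - D₀) * (1 - P) = D * (1 - P) := by
      rw [Matrix.sub_mul, Matrix.mul_sub D₀, Matrix.mul_one, hD₀P, sub_self, sub_zero]
    rw [← trace_mul_one_sub_mul_transpose hV hD hPs hP, ← hE]
    exact trace_mul_mul_transpose_le (isSymm_one.sub hPs) hP.one_sub _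
  calc ∑ j, min 1 (lam * s j) ≤ ∑ j, (T j j + lam * (s j * (1 - T j j))) := by
        refine Finset.sum_le_sum fun j _ => ?_
        have h0 := diag_nonneg_of_isSymm_of_isIdempotentElem hTs hT j
        have h1 := diag_le_one_of_isSymm_of_isIdempotentElem hTs hT j
        nlinarith [min_le_left 1 (lam * s j), min_le_right 1 (lam * s j)]
    _ = ∑ j, T j j + lam * ∑ j, s j * (1 - T j j) := by
        rw [Finset.sum_add_distrib, Finset.mul_sum]
    _ ≤ trace (C * Cᵀ) + lam * trace ((D - D₀) * (D - D₀)ᵀ) :=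
        add_le_add hCtr (mul_le_mul_of_nonneg_left hEtr hlam)

theorem exists_mul_eq_self_trace_eq (hV : Vᵀ * V = 1) (hD : Dᵀ * D = V * diagonal s * Vᵀ)
    {π : ι → ℝ} (hπ : IsIdempotentElem π) :
    ∃ C : Matrix ι ι ℝ, D * C * C = D * C ∧ trace (C * Cᵀ) = ∑ j, π j ∧
      trace ((D - D * C) * (D - D * C)ᵀ) = ∑ j, s j * (1 - π j) := by
  set P := V * diagonal π * Vᵀ
  have hconj : Vᵀ * P * V = diagonal π := by
    simp only [P, ← Matrix.mul_assoc, hV, Matrix.one_mul]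
    rw [Matrix.mul_assoc, hV, Matrix.mul_one]
  have hPs : P.IsSymm := by
    simpa [P] using (isSymm_diagonal π).transpose_mul_mul Vᵀ
  have hP : IsIdempotentElem P := by
    have hπ' : IsIdempotentElem (diagonal π) := hπ.map (diagonalRingHom ι ℝ)
    simpa [P] using hπ'.transpose_mul_mul (V := Vᵀ) (by rwa [transpose_transpose])
  refine ⟨P, by rw [Matrix.mul_assoc, hP.eq], ?_, ?_⟩
  · rw [hPs.eq, hP.eq, trace_eq_sum_diag_transpose_mul_mul hV, hconj]
    simp
  · have hE : D - D * P = D * (1 - P) := by rw [Matrix.mul_sub, Matrix.mul_one]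
    rw [hE, trace_mul_one_sub_mul_transpose hV hD hPs hP, hconj]
    simp

end Spectral

theorem exists_natCast_add_sum_eq_sum_min_one {q : ℕ} {a : Fin q → ℝ} (ha : Antitone a) :
    ∃ r ≤ q, (r : ℝ) + ∑ i ∈ Finset.univ.filter (fun i : Fin q => r ≤ (i : ℕ)), a i =
      ∑ i, min 1 (a i) := by
  set r := (Finset.univ.filter fun i => 1 ≤ a i).card
  have hr (i : Fin q) : (i : ℕ) < r ↔ 1 ≤ a i :=
    Fin.lt_card_filter_univ_iff_apply_of_imp _ fun _ _ hji h => h.trans (ha hji)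
  have hrq : r ≤ q := (Finset.card_filter_le _ _).trans (Finset.card_fin q).le
  refine ⟨r, hrq, ?_⟩
  have hmin (i : Fin q) : min 1 (a i) = if (i : ℕ) < r then 1 else a i := by
    split_ifs with h
    · exact min_eq_left ((hr i).mp h)
    · exact min_eq_right (le_of_lt (not_le.mp (mt (hr i).mpr h)))
  simp only [hmin, Finset.sum_ite, Finset.sum_const, Fin.card_filter_val_lt, min_eq_right hrq,
    nsmul_eq_mul, mul_one, not_lt]

theorem transpose_mul_self_of_eq_mul_mul_transpose {κ ι : Type*} [Fintype κ] [Fintype ι]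
    [DecidableEq κ] {D Sig : Matrix κ ι ℝ} {U : Matrix κ κ ℝ} {V : Matrix ι ι ℝ}
    (hSVD : D = U * Sig * Vᵀ) (hU : Uᵀ * U = 1) : Dᵀ * D = V * (Sigᵀ * Sig) * Vᵀ := by
  rw [hSVD]
  simp only [transpose_mul, transpose_transpose, Matrix.mul_assoc]
  rw [← Matrix.mul_assoc Uᵀ U, hU, Matrix.one_mul]

section SingularValues

variable {m n : ℕ} {Sig : Matrix (Fin m) (Fin n) ℝ}

theorem transpose_mul_self_eq_diagonal
    (hSig : ∀ (i : Fin m) (j : Fin n), (i : ℕ) ≠ j → Sig i j = 0) :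
    Sigᵀ * Sig = diagonal fun j => ∑ i, Sig i j ^ 2 := by
  ext j j'
  rcases eq_or_ne j j' with rfl | hjj
  · simp [mul_apply, sq]
  · rw [diagonal_apply_ne _ hjj, mul_apply]
    refine Finset.sum_eq_zero fun i _ => ?_
    by_cases hij : (i : ℕ) = j
    · rw [hSig i j' (hij ▸ Fin.val_ne_of_ne hjj), mul_zero]
    · rw [transpose_apply, hSig i j hij, zero_mul]

theorem sum_apply_sum_sq_col
    (hSig : ∀ (i : Fin m) (j : Fin n), (i : ℕ) ≠ j → Sig i j = 0) {σ : Fin (min m n) → ℝ}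
    (hσ : ∀ i : Fin (min m n),
      σ i = Sig ⟨i, lt_of_lt_of_le i.isLt (min_le_left m n)⟩
              ⟨i, lt_of_lt_of_le i.isLt (min_le_right m n)⟩)
    (g : Fin n → ℝ → ℝ) (hg : ∀ j, g j 0 = 0) :
    ∑ j, g j (∑ i, Sig i j ^ 2) = ∑ i, g (Fin.castLE (min_le_right m n) i) (σ i ^ 2) := by
  refine (Fintype.sum_of_injective (Fin.castLE (min_le_right m n)) (Fin.castLE_injective _) _ _
    (fun j hj => ?_) fun i => ?_).symm
  · have hjm : m ≤ j := by
      by_contra! hjm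
      exact hj ⟨⟨j, lt_min hjm j.isLt⟩, rfl⟩
    rw [Finset.sum_eq_zero fun i _ => by rw [hSig i j (by omega), sq, mul_zero], hg]
  · rw [Finset.sum_eq_single (Fin.castLE (min_le_left m n) i), hσ]
    · rfl
    · intro i' _ hi'
      rw [hSig i' _ fun h => hi' (Fin.ext h), sq, mul_zero]
    · simp

theorem sum_sum_sq_col_mul_one_sub_ite
    (hSig : ∀ (i : Fin m) (j : Fin n), (i : ℕ) ≠ j → Sig i j = 0) {σ : Fin (min m n) → ℝ}
    (hσ : ∀ i : Fin (min m n),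
      σ i = Sig ⟨i, lt_of_lt_of_le i.isLt (min_le_left m n)⟩
              ⟨i, lt_of_lt_of_le i.isLt (min_le_right m n)⟩)
    (k : ℕ) :
    ∑ j, (∑ i, Sig i j ^ 2) * (1 - if (j : ℕ) < k then 1 else 0) =
      ∑ i ∈ Finset.univ.filter (fun i : Fin (min m n) => k ≤ (i : ℕ)), σ i ^ 2 := by
  rw [sum_apply_sum_sq_col hSig hσ (fun j x => x * (1 - if (j : ℕ) < k then 1 else 0)) (by simp),
    Finset.sum_filter]
  refine Finset.sum_congr rfl fun i _ => ?_
  by_cases h : k ≤ (i : ℕ)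
  · simp [h, not_lt.mpr h]
  · simp [h, not_le.mp h]

end SingularValues

/-- Let D be a real m×n matrix with singular values
σ₁ ≥ … ≥ σ_q ≥ 0 (q = min(m,n), given via a full SVD D = U Σ Vᵀ), let λ > 0,
and let k ∈ {0,…,q} minimize r ↦ r + λ Σ_{i=r+1}^{q} σᵢ². Then every feasible
pair (C, D₀) with D₀ = D₀ C satisfies
(1/2)‖C‖_F² + (λ/2)‖D − D₀‖_F² ≥ (1/2) k + (λ/2) Σ_{i=k+1}^{q} σᵢ²,
and consequently the minimal PCE objective value equals
(1/2) min_{0 ≤ r ≤ q} (r + λ Σ_{i=r+1}^{q} σᵢ²). -/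
theorem stmt_12 {m n : ℕ}
    (D : Matrix (Fin m) (Fin n) ℝ)
    (U : Matrix (Fin m) (Fin m) ℝ) (Sig : Matrix (Fin m) (Fin n) ℝ)
    (V : Matrix (Fin n) (Fin n) ℝ)
    (σ : Fin (min m n) → ℝ)
    (hSVD : D = U * Sig * Vᵀ)
    (hU : Uᵀ * U = 1) (hV : Vᵀ * V = 1)
    (hSigdiag : ∀ (i : Fin m) (j : Fin n), (i : ℕ) ≠ (j : ℕ) → Sig i j = 0)
    (hσ : ∀ i : Fin (min m n),
      σ i = Sig ⟨i, lt_of_lt_of_le i.isLt (min_le_left m n)⟩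
              ⟨i, lt_of_lt_of_le i.isLt (min_le_right m n)⟩)
    (hdesc : ∀ i j : Fin (min m n), i ≤ j → σ j ≤ σ i)
    (hnonneg : ∀ i : Fin (min m n), 0 ≤ σ i)
    (lam : ℝ) (hlam : 0 < lam)
    (k : ℕ) (hkq : k ≤ min m n)
    (hkmin : ∀ r : ℕ, r ≤ min m n →
      (k : ℝ) + lam * ∑ i ∈ Finset.univ.filter (fun i : Fin (min m n) => k ≤ (i : ℕ)), (σ i) ^ 2 ≤
      (r : ℝ) + lam * ∑ i ∈ Finset.univ.filter (fun i : Fin (min m n) => r ≤ (i : ℕ)), (σ i) ^ 2) :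
    (∀ (D₀ : Matrix (Fin m) (Fin n) ℝ) (C : Matrix (Fin n) (Fin n) ℝ),
      D₀ = D₀ * C →
      (1 / 2) * (frobeniusNorm C) ^ 2 + (lam / 2) * (frobeniusNorm (D - D₀)) ^ 2 ≥
        (1 / 2) * (k : ℝ) +
          (lam / 2) *
            ∑ i ∈ Finset.univ.filter (fun i : Fin (min m n) => k ≤ (i : ℕ)), (σ i) ^ 2) ∧
    IsLeast
      { v : ℝ | ∃ (D₀ : Matrix (Fin m) (Fin n) ℝ) (C : Matrix (Fin n) (Fin n) ℝ),
          D₀ = D₀ * C ∧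
          v = (1 / 2) * (frobeniusNorm C) ^ 2 + (lam / 2) * (frobeniusNorm (D - D₀)) ^ 2 }
      ((1 / 2) *
        ((k : ℝ) +
          lam * ∑ i ∈ Finset.univ.filter (fun i : Fin (min m n) => k ≤ (i : ℕ)), (σ i) ^ 2)) := by
  set s : Fin n → ℝ := fun j => ∑ i, Sig i j ^ 2
  set tail := ∑ i ∈ Finset.univ.filter (fun i : Fin (min m n) => k ≤ (i : ℕ)), σ i ^ 2
  have hD : Dᵀ * D = V * diagonal s * Vᵀ := by
    rw [transpose_mul_self_of_eq_mul_mul_transpose hSVD hU, transpose_mul_self_eq_diagonal hSigdiag]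
  have lower (D₀ : Matrix (Fin m) (Fin n) ℝ) (C : Matrix (Fin n) (Fin n) ℝ) (h : D₀ = D₀ * C) :
      k + lam * tail ≤ trace (C * Cᵀ) + lam * trace ((D - D₀) * (D - D₀)ᵀ) := by
    have hanti : Antitone fun i => lam * σ i ^ 2 := fun i j hij =>
      mul_le_mul_of_nonneg_left (pow_le_pow_left₀ (hnonneg j) (hdesc i j hij) 2) hlam.le
    obtain ⟨r, hrq, hr⟩ := exists_natCast_add_sum_eq_sum_min_one hanti
    calc k + lam * tail
        ≤ r + lam * ∑ i ∈ Finset.univ.filter (fun i : Fin (min m n) => r ≤ (i : ℕ)), σ i ^ 2 :=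
          hkmin r hrq
      _ = ∑ i, min 1 (lam * σ i ^ 2) := by rw [Finset.mul_sum, hr]
      _ = ∑ j, min 1 (lam * s j) :=
          (sum_apply_sum_sq_col hSigdiag hσ (fun _ x => min 1 (lam * x)) (by simp)).symm
      _ ≤ trace (C * Cᵀ) + lam * trace ((D - D₀) * (D - D₀)ᵀ) :=
          sum_min_one_le_trace_add_trace hV hD hlam.le h.symm
  obtain ⟨C₀, hC₀, hCtr, hEtr⟩ := exists_mul_eq_self_trace_eq hV hD
    (π := fun j : Fin n => if (j : ℕ) < k then 1 else 0)
    (by ext j; by_cases h : (j : ℕ) < k <;> simp [h])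
  refine ⟨fun D₀ C h => ?_, ⟨D * C₀, C₀, hC₀.symm, ?_⟩, ?_⟩
  · rw [frobeniusNorm_sq, frobeniusNorm_sq]
    linarith [lower D₀ C h]
  · rw [frobeniusNorm_sq, frobeniusNorm_sq, hCtr, hEtr, Finset.sum_boole, Fin.card_filter_val_lt,
      min_eq_right (hkq.trans (min_le_right m n)), sum_sum_sq_col_mul_one_sub_ite hSigdiag hσ]
    ring
  · rintro v ⟨D₀, C, h, rfl⟩
    rw [frobeniusNorm_sq, frobeniusNorm_sq]
    linarith [lower D₀ C h]
end
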